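/- arXiv:1903.04819 — 6 statements merged into one kernel-verified Lean document; each statement's English description precedes it below -/
import Mathlib

section
/- For every linear subspace V ⊆ ℝ^m and every w ∈ V^⊥ there exists exactly one character χ(V+w) of C_R(ℝ^m), i.e. exactly one nonzero continuous multiplicative linear functional χ : C_R(ℝ^m) → ℂ such that for every finite-dimensional subspace U ⊆ ℝ^m and every continuous function g on U vanishing at infinity: χ(g ∘ P_U) = g(P_U w) if V ⊆ U^⊥, and χ(g ∘ P_U) = 0 if V ⊄ U^⊥. -/
/-!
The character `χ(V+w)` is evaluation at infinity along the moment curve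
`γ(t) = w + t b₁ + t² b₂ + ⋯ + t^d b_d` through a basis `b` of `V`, the limit being taken along an
ultrafilter finer than `atTop` so that every bounded function has one. If `V ⊆ U^⊥`, then
`P_U γ(t) = P_U w` for all `t`. Otherwise some `p ∈ U` is not orthogonal to `V`, so `⟪p, γ(t)⟫` is a
nonconstant polynomial in `t`; hence `P_U γ(t) → ∞` and `g(P_U γ(t)) → 0` for `g ∈ C₀(U)`.
Uniqueness: each generator `h^λ_x` is itself a levee `g ∘ P_{ℝx}`, so the prescribed values fix a
character on a dense subalgebra.
-/

open Filter Topology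
open scoped BoundedContinuousFunction InnerProductSpace

noncomputable section

/-- `ℝ^m` with its standard inner product. -/
abbrev E (m : ℕ) : Type := EuclideanSpace ℝ (Fin m)

/-- The resolvent functions `h^λ_x : y ↦ 1/(iλ - ⟨x,y⟩)`, as elements of `C_b(ℝ^m, ℂ)`. -/
def resolventFns (m : ℕ) : Set (E m →ᵇ ℂ) :=
  {f | ∃ (x : E m) (l : ℝ), l ≠ 0 ∧
    ∀ y : E m, f y = (Complex.I * (l : ℂ) - ((⟪x, y⟫_ℝ : ℝ) : ℂ))⁻¹}

/-- The commutative resolvent algebra: the smallest closed star-subalgebra of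
`C_b(ℝ^m, ℂ)` containing all the functions `h^λ_x`. -/
def CR (m : ℕ) : StarSubalgebra ℂ (E m →ᵇ ℂ) :=
  (StarAlgebra.adjoin ℂ (resolventFns m)).topologicalClosure

/-- The distance of `f` to the set `S` in the sup norm, `inf {‖f - ξ‖_∞ : ξ ∈ S}`. -/
def qdist {m : ℕ} (S : Set (E m →ᵇ ℂ)) (f : E m →ᵇ ℂ) : ℝ :=
  sInf ((fun ξ => ‖f - ξ‖) '' S)

/-- The recursive filtration `C_r(ℝ^m)`: `C_0` consists of the continuous functions vanishing
at infinity; `C_{r+1}` consists of those bounded continuous `f` admitting a countable family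
of levees `g_i ∘ P_i`, with pairwise distinct orthogonal projections `P_i` onto
`(m - (r+1))`-dimensional subspaces and `g_i ∈ C₀(ran P_i)`, summing unconditionally to `f`
in the seminorm `‖·‖_r = qdist (Cfilt m r)`. -/
def Cfilt (m : ℕ) : ℕ → Set (E m →ᵇ ℂ)
  | 0 => {f | Tendsto f (cocompact (E m)) (𝓝 0)}
  | (r + 1) =>
    {f | ∃ (I : Set ℕ) (V : I → Submodule ℝ (E m)) (g : ∀ i : I, V i → ℂ)
        (F : I → (E m →ᵇ ℂ)),
      Function.Injective V ∧
      (∀ i, Module.finrank ℝ (V i) = m - (r + 1)) ∧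
      (∀ i, Continuous (g i)) ∧
      (∀ i, Tendsto (g i) (cocompact _) (𝓝 0)) ∧
      (∀ (i : I) (y : E m), F i y = g i (Submodule.orthogonalProjectionOnto (V i) y)) ∧
      Tendsto (fun s : Finset I => qdist (Cfilt m r) (f - ∑ i ∈ s, F i)) atTop (𝓝 0)}


/-- The defining property of the character `χ(V+w)` of `C_R(ℝ^m)`: on any levee `g ∘ P_U`
(with `U ⊆ ℝ^m` a subspace and `g ∈ C₀(U)`) it takes the value `g(P_U w)` if `V ⊆ U^⊥`,
and `0` otherwise. -/
def IsResolventChar (m : ℕ) (V : Submodule ℝ (E m)) (w : E m)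
    (φ : ↥(CR m) → ℂ) : Prop :=
  ∀ (U : Submodule ℝ (E m)) (g : U → ℂ), Continuous g →
    Tendsto g (cocompact _) (𝓝 0) →
    ∀ f : ↥(CR m), (∀ y : E m, (f : E m →ᵇ ℂ) y = g (Submodule.orthogonalProjectionOnto U y)) →
      (V ≤ Uᗮ → φ f = g (Submodule.orthogonalProjectionOnto U w)) ∧ (¬ V ≤ Uᗮ → φ f = 0)

namespace BoundedContinuousFunction

variable {X : Type*} [TopologicalSpace X]

theorem tendsto_limUnder_ultrafilter {β : Type*} [PseudoMetricSpace β] [ProperSpace β]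
    [Nonempty β] (f : X →ᵇ β) (𝒰 : Ultrafilter X) : Tendsto f 𝒰 (𝓝 (limUnder 𝒰 f)) := by
  refine tendsto_nhds_limUnder ?_
  obtain ⟨c, -, hc⟩ := f.isBounded_range.isCompact_closure.ultrafilter_le_nhds (𝒰.map f)
    (le_principal_iff.mpr (Ultrafilter.mem_map.mpr (univ_mem' fun x => subset_closure ⟨x, rfl⟩)))
  exact ⟨c, hc⟩

variable {𝕜 : Type*} [NormedField 𝕜] [ProperSpace 𝕜] (𝒰 : Ultrafilter X)

/-- Evaluation at the point `𝒰` of the Stone–Čech compactification of `X`. -/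
def ultrafilterEval : (X →ᵇ 𝕜) →L[𝕜] 𝕜 :=
  LinearMap.mkContinuous
    { toFun := fun f => limUnder 𝒰 f
      map_add' := fun f g =>
        ((f.tendsto_limUnder_ultrafilter 𝒰).add (g.tendsto_limUnder_ultrafilter 𝒰)).limUnder_eq
      map_smul' := fun c f => ((f.tendsto_limUnder_ultrafilter 𝒰).const_smul c).limUnder_eq }
    1 fun f => by
      rw [one_mul]
      exact le_of_tendsto (f.tendsto_limUnder_ultrafilter 𝒰).norm
        (univ_mem' fun x => f.norm_coe_le_norm x)

variable {𝒰}

theorem ultrafilterEval_eq_of_tendsto {f : X →ᵇ 𝕜} {c : 𝕜} (h : Tendsto f 𝒰 (𝓝 c)) :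
    ultrafilterEval 𝒰 f = c :=
  h.limUnder_eq

variable (𝒰)

theorem ultrafilterEval_one : ultrafilterEval 𝒰 (1 : X →ᵇ 𝕜) = 1 :=
  ultrafilterEval_eq_of_tendsto tendsto_const_nhds

theorem ultrafilterEval_mul (f g : X →ᵇ 𝕜) :
    ultrafilterEval 𝒰 (f * g) = ultrafilterEval 𝒰 f * ultrafilterEval 𝒰 g :=
  ultrafilterEval_eq_of_tendsto
    ((f.tendsto_limUnder_ultrafilter 𝒰).mul (g.tendsto_limUnder_ultrafilter 𝒰))

def ultrafilterCharacter (S : Subalgebra 𝕜 (X →ᵇ 𝕜)) : WeakDual.characterSpace 𝕜 S :=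
  ⟨StrongDual.toWeakDual ((ultrafilterEval 𝒰).comp S.toSubmodule.subtypeL), by
    rw [WeakDual.CharacterSpace.eq_set_map_one_map_mul]
    exact ⟨ultrafilterEval_one 𝒰, fun f g => ultrafilterEval_mul 𝒰 (f : X →ᵇ 𝕜) (g : X →ᵇ 𝕜)⟩⟩

theorem ultrafilterCharacter_apply (S : Subalgebra 𝕜 (X →ᵇ 𝕜)) (f : S) :
    (ultrafilterCharacter 𝒰 S : WeakDual 𝕜 S) f = ultrafilterEval 𝒰 (f : X →ᵇ 𝕜) :=
  rfl

end BoundedContinuousFunction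

section MomentCurve

variable {F : Type*} [NormedAddCommGroup F] [InnerProductSpace ℝ F]
  (V : Submodule ℝ F) [FiniteDimensional ℝ V] (w : F)

def momentCurve (t : ℝ) : F :=
  w + ∑ i : Fin (Module.finrank ℝ V), t ^ ((i : ℕ) + 1) • (Module.finBasis ℝ V i : F)

variable {V}

theorem orthogonalProjectionOnto_momentCurve_of_le {U : Submodule ℝ F}
    [U.HasOrthogonalProjection] (h : V ≤ Uᗮ) (t : ℝ) :
    U.orthogonalProjectionOnto (momentCurve V w t) = U.orthogonalProjectionOnto w := by
  simp [momentCurve, Submodule.orthogonalProjectionOnto_apply_of_mem_orthogonal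
    (h (Module.finBasis ℝ V _).2)]

theorem exists_inner_finBasis_ne_zero {p : F} (hp : p ∉ Vᗮ) :
    ∃ i, ⟪p, (Module.finBasis ℝ V i : F)⟫_ℝ ≠ 0 := by
  by_contra! h
  refine hp ((Submodule.mem_orthogonal' V p).mpr fun u hu => ?_)
  have : (innerₛₗ ℝ p).comp V.subtype = 0 := (Module.finBasis ℝ V).ext h
  exact LinearMap.congr_fun this ⟨u, hu⟩

theorem tendsto_abs_inner_momentCurve_atTop {p : F} (hp : p ∉ Vᗮ) :
    Tendsto (fun t => |⟪p, momentCurve V w t⟫_ℝ|) atTop atTop := by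
  obtain ⟨i₀, hi₀⟩ := exists_inner_finBasis_ne_zero hp
  let a i := ⟪p, (Module.finBasis ℝ V i : F)⟫_ℝ
  let q : Polynomial ℝ := Polynomial.C ⟪p, w⟫_ℝ +
    ∑ i : Fin (Module.finrank ℝ V), Polynomial.C (a i) * Polynomial.X ^ ((i : ℕ) + 1)
  have hq : ∀ t, q.eval t = ⟪p, momentCurve V w t⟫_ℝ := fun t => by
    simp only [q, a, momentCurve, Polynomial.eval_add, Polynomial.eval_C, Polynomial.eval_finsetSum,
      Polynomial.eval_mul, Polynomial.eval_pow, Polynomial.eval_X, inner_add_right, inner_sum,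
      real_inner_smul_right, mul_comm]
  have hcoeff : q.coeff ((i₀ : ℕ) + 1) = a i₀ := by
    simp [q, Polynomial.finsetSum_coeff, Polynomial.coeff_C_mul, Polynomial.coeff_X_pow,
      Fin.val_inj]
  have hdeg : 0 < q.degree := (WithBot.coe_lt_coe.mpr i₀.val.succ_pos).trans_le
    (Polynomial.le_degree_of_ne_zero (hcoeff ▸ hi₀))
  simpa only [hq] using Polynomial.abs_tendsto_atTop q hdeg

theorem tendsto_orthogonalProjectionOnto_momentCurve_cobounded {U : Submodule ℝ F}
    [U.HasOrthogonalProjection] (h : ¬ V ≤ Uᗮ) :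
    Tendsto (fun t => U.orthogonalProjectionOnto (momentCurve V w t)) atTop
      (Bornology.cobounded U) := by
  obtain ⟨p, hpU, hpV⟩ : ∃ p ∈ U, p ∉ Vᗮ := SetLike.not_le_iff_exists.mp
    fun hUV => h (V.le_orthogonal_orthogonal.trans (Submodule.orthogonal_le hUV))
  have hbound : ∀ t, |⟪p, momentCurve V w t⟫_ℝ| ≤
      ‖p‖ * ‖U.orthogonalProjectionOnto (momentCurve V w t)‖ := fun t => by
    rw [← Submodule.inner_orthogonalProjectionOnto_eq_of_mem_left (⟨p, hpU⟩ : U)]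
    exact abs_real_inner_le_norm _ _
  have hp0 : 0 < ‖p‖ := norm_pos_iff.mpr fun hp => hpV (hp ▸ Submodule.zero_mem _)
  rw [← tendsto_norm_atTop_iff_cobounded]
  refine tendsto_atTop_mono (fun t => ?_)
    ((tendsto_abs_inner_momentCurve_atTop w hpV).atTop_div_const hp0)
  rw [div_le_iff₀' hp0]
  exact hbound t

end MomentCurve

theorem tendsto_inner_span_singleton_cocompact {F : Type*} [NormedAddCommGroup F]
    [InnerProductSpace ℝ F] (x : F) :
    Tendsto (fun u : ℝ ∙ x => ⟪x, (u : F)⟫_ℝ) (cocompact _) (cocompact ℝ) := by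
  let ℓ : (ℝ ∙ x) →ₗ[ℝ] ℝ := (innerₛₗ ℝ x).comp (ℝ ∙ x).subtype
  have hker : LinearMap.ker ℓ = ⊥ := by
    refine (Submodule.eq_bot_iff _).mpr fun u hu => ?_
    have hu' : (u : F) ∈ (ℝ ∙ x)ᗮ := Submodule.mem_orthogonal_singleton_iff_inner_right.mpr hu
    exact Subtype.ext (Submodule.inf_orthogonal_eq_bot (ℝ ∙ x) |>.le ⟨u.2, hu'⟩)
  exact (LinearMap.isClosedEmbedding_of_injective hker).tendsto_cocompact

theorem tendsto_inv_I_mul_sub_ofReal_cocompact (l : ℝ) :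
    Tendsto (fun r : ℝ => (Complex.I * l - r)⁻¹) (cocompact ℝ) (𝓝 0) := by
  rw [← Metric.cobounded_eq_cocompact]
  exact tendsto_inv₀_cobounded.comp
    ((tendsto_const_sub_cobounded _).comp (RCLike.tendsto_ofReal_cobounded_cobounded ℂ))

theorem exists_levee_of_mem_resolventFns {m : ℕ} {f : E m →ᵇ ℂ} (hf : f ∈ resolventFns m) :
    ∃ (U : Submodule ℝ (E m)) (g : U → ℂ), Continuous g ∧ Tendsto g (cocompact U) (𝓝 0) ∧
      ∀ y, f y = g (U.orthogonalProjectionOnto y) := by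
  obtain ⟨x, l, hl, hf⟩ := hf
  have hden : ∀ r : ℝ, Complex.I * l - r ≠ 0 := fun r h => hl (by simpa using congrArg Complex.im h)
  refine ⟨ℝ ∙ x, fun u => (Complex.I * l - (⟪x, (u : E m)⟫_ℝ : ℝ))⁻¹, ?_,
    (tendsto_inv_I_mul_sub_ofReal_cocompact l).comp (tendsto_inner_span_singleton_cocompact x),
    fun y => ?_⟩
  · exact (continuous_const.sub (Complex.continuous_ofReal.comp
      (continuous_const.inner continuous_subtype_val))).inv₀ fun u => hden _
  · rw [hf y, ← Submodule.inner_orthogonalProjectionOnto_eq_of_mem_left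
      (⟨x, Submodule.mem_span_singleton_self x⟩ : ℝ ∙ x)]
    rfl

theorem WeakDual.CharacterSpace.ext_of_dense_adjoin {𝕜 A : Type*} [CommRing 𝕜] [NoZeroDivisors 𝕜]
    [TopologicalSpace 𝕜] [ContinuousAdd 𝕜] [ContinuousConstSMul 𝕜 𝕜] [T2Space 𝕜]
    [TopologicalSpace A] [Semiring A] [Algebra 𝕜 A] {s : Set A}
    (hs : Dense (Algebra.adjoin 𝕜 s : Set A)) {φ ψ : characterSpace 𝕜 A} (h : Set.EqOn φ ψ s) :
    φ = ψ :=
  ext fun a =>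
    (AlgHom.eqOn_adjoin_iff (φ := toAlgHom φ) (ψ := toAlgHom ψ) |>.mpr h).closure
      (map_continuous φ) (map_continuous ψ) (hs a)

theorem star_resolventFns_subset (m : ℕ) : star (resolventFns m) ⊆ resolventFns m := by
  rintro f ⟨x, l, hl, hf⟩
  refine ⟨x, -l, neg_ne_zero.mpr hl, fun y => ?_⟩
  rw [← star_star f, BoundedContinuousFunction.star_apply, hf y, star_inv₀, Complex.star_def]
  simp only [map_sub, map_mul, Complex.conj_I, Complex.conj_ofReal]
  push_cast
  ring

theorem dense_adjoin_resolventFns (m : ℕ) :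
    Dense (Algebra.adjoin ℂ {f : CR m | (f : E m →ᵇ ℂ) ∈ resolventFns m} : Set (CR m)) := by
  have himage : Subtype.val '' {f : CR m | (f : E m →ᵇ ℂ) ∈ resolventFns m} = resolventFns m :=
    Subtype.image_preimage_coe _ _ |>.trans (Set.inter_eq_right.mpr fun f hf =>
      StarSubalgebra.le_topologicalClosure _ (StarAlgebra.subset_adjoin ℂ _ hf))
  have hadjoin : (StarAlgebra.adjoin ℂ (resolventFns m)).toSubalgebra =
      Algebra.adjoin ℂ (resolventFns m) := by
    rw [StarAlgebra.adjoin_toSubalgebra, Set.union_eq_left.mpr (star_resolventFns_subset m)]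
  have hval : (CR m).toSubalgebra.val ''
      (Algebra.adjoin ℂ {f : CR m | (f : E m →ᵇ ℂ) ∈ resolventFns m} : Set (CR m)) =
        StarAlgebra.adjoin ℂ (resolventFns m) := by
    rw [← Subalgebra.coe_map, AlgHom.map_adjoin]
    exact congrArg SetLike.coe ((congrArg _ himage).trans hadjoin.symm)
  exact Subtype.dense_iff.mpr
    ((StarSubalgebra.topologicalClosure_coe _).trans (congrArg closure hval.symm)).le

def resolventChar {m : ℕ} (V : Submodule ℝ (E m)) (w : E m) :
    WeakDual.characterSpace ℂ (CR m) :=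
  BoundedContinuousFunction.ultrafilterCharacter ((Ultrafilter.of atTop).map (momentCurve V w))
    (CR m).toSubalgebra

theorem isResolventChar_resolventChar {m : ℕ} (V : Submodule ℝ (E m)) (w : E m) :
    IsResolventChar m V w (fun f => (resolventChar V w : WeakDual ℂ (CR m)) f) := by
  intro U g _ hg f hf
  have hlim : ∀ {c : ℂ}, Tendsto (fun t => g (U.orthogonalProjectionOnto (momentCurve V w t)))
      (Ultrafilter.of (atTop : Filter ℝ)) (𝓝 c) → (resolventChar V w : WeakDual ℂ (CR m)) f = c :=
    fun h => by
      rw [resolventChar, BoundedContinuousFunction.ultrafilterCharacter_apply]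
      refine BoundedContinuousFunction.ultrafilterEval_eq_of_tendsto ?_
      rw [Ultrafilter.coe_map, tendsto_map'_iff]
      simpa only [Function.comp_def, hf] using h
  refine ⟨fun hVU => hlim ?_, fun hVU => hlim ?_⟩
  · simp only [orthogonalProjectionOnto_momentCurve_of_le w hVU, tendsto_const_nhds]
  · rw [← Metric.cobounded_eq_cocompact] at hg
    exact (hg.comp (tendsto_orthogonalProjectionOnto_momentCurve_cobounded w hVU)).mono_left
      (Ultrafilter.of_le _)

theorem IsResolventChar.eq {m : ℕ} {V : Submodule ℝ (E m)} {w : E m}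
    {φ ψ : WeakDual.characterSpace ℂ (CR m)}
    (hφ : IsResolventChar m V w (fun f => (φ : WeakDual ℂ (CR m)) f))
    (hψ : IsResolventChar m V w (fun f => (ψ : WeakDual ℂ (CR m)) f)) : φ = ψ := by
  refine WeakDual.CharacterSpace.ext_of_dense_adjoin (dense_adjoin_resolventFns m) fun f hf => ?_
  obtain ⟨U, g, hgc, hg0, hfg⟩ := exists_levee_of_mem_resolventFns hf
  obtain ⟨hφ₁, hφ₂⟩ := hφ U g hgc hg0 f hfg
  obtain ⟨hψ₁, hψ₂⟩ := hψ U g hgc hg0 f hfg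
  by_cases hVU : V ≤ Uᗮ
  · exact (hφ₁ hVU).trans (hψ₁ hVU).symm
  · exact (hφ₂ hVU).trans (hψ₂ hVU).symm

theorem existsUnique_resolventChar_general (m : ℕ) (V : Submodule ℝ (E m)) (w : E m) :
    ∃! φ : WeakDual.characterSpace ℂ (CR m),
      IsResolventChar m V w (fun a => (φ : WeakDual ℂ (CR m)) a) :=
  ⟨resolventChar V w, isResolventChar_resolventChar V w,
    fun _ hψ => hψ.eq (isResolventChar_resolventChar V w)⟩

/-- for every linear subspace `V ⊆ ℝ^m` and every `w ∈ V^⊥` there is exactly one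
character (nonzero continuous multiplicative linear functional) `χ(V+w)` of `C_R(ℝ^m)` taking
the prescribed values on all levees. -/
theorem existsUnique_resolventChar (m : ℕ) (V : Submodule ℝ (E m)) (w : E m) (hw : w ∈ Vᗮ) :
    ∃! φ : WeakDual.characterSpace ℂ (CR m),
      IsResolventChar m V w (fun a => (φ : WeakDual ℂ (CR m)) a) :=
  existsUnique_resolventChar_general m V w
end
end

section
/- The characters χ(V+w) distinguish affine subspaces: if V, V' ⊆ ℝ^m are linear subspaces, w ∈ V^⊥, w' ∈ V'^⊥, and the characters χ(V+w) and χ(V'+w') agree on every element of C_R(ℝ^m), then V = V' and w = w'. -/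
/-!
The resolvent function `h^1_x(y) = (i - ⟪x, y⟫)⁻¹` is a levee over the line `ℝ ∙ x`, so `χ(V+w)`
sends it to `(i - ⟪x, w⟫)⁻¹ ≠ 0` when `x ∈ Vᗮ` and to `0` otherwise. Equal characters therefore
have the same `Vᗮ`, hence the same `V`; and then `⟪x, w⟫ = ⟪x, w'⟫` for all `x ∈ Vᗮ`, which
for `w, w' ∈ Vᗮ` forces `w = w'` (take `x = w - w'`).
-/

open Filter Topology
open scoped BoundedContinuousFunction InnerProductSpace

noncomputable section

namespace Complex

lemma I_sub_ofReal_ne_zero (t : ℝ) : I - (t : ℂ) ≠ 0 := fun h => by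
  simpa using congrArg im h

end Complex

section

open Complex

def resolventOne (t : ℝ) : ℂ := (I - t)⁻¹

lemma resolventOne_ne_zero (t : ℝ) : resolventOne t ≠ 0 :=
  inv_ne_zero (I_sub_ofReal_ne_zero t)

lemma resolventOne_injective : Function.Injective resolventOne := fun s t h => by
  simpa [resolventOne] using h

lemma continuous_resolventOne : Continuous resolventOne :=
  (continuous_const.sub continuous_ofReal).inv₀ I_sub_ofReal_ne_zero

lemma norm_resolventOne_le_one (t : ℝ) : ‖resolventOne t‖ ≤ 1 := by
  rw [resolventOne, norm_inv]
  exact inv_le_one_of_one_le₀ (by simpa using abs_im_le_norm (I - (t : ℂ)))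

lemma tendsto_resolventOne_cocompact : Tendsto resolventOne (cocompact ℝ) (𝓝 0) := by
  have hbound (t : ℝ) : ‖t‖ ≤ ‖I - (t : ℂ)‖ := by
    simpa using abs_re_le_norm (I - (t : ℂ))
  have hcobounded : Tendsto (fun t : ℝ => I - (t : ℂ)) (cocompact ℝ) (Bornology.cobounded ℂ) :=
    tendsto_norm_atTop_iff_cobounded.1 (tendsto_atTop_mono hbound tendsto_norm_cocompact_atTop)
  exact tendsto_inv₀_cobounded.comp hcobounded

/-- The resolvent function `h^1_x`. -/
def resolventFn {m : ℕ} (x : E m) : E m →ᵇ ℂ :=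
  BoundedContinuousFunction.ofNormedAddCommGroup (fun y => resolventOne ⟪x, y⟫_ℝ)
    (continuous_resolventOne.comp (continuous_const.inner continuous_id)) 1
    (fun _ => norm_resolventOne_le_one _)

lemma resolventFn_mem_CR {m : ℕ} (x : E m) : resolventFn x ∈ CR m :=
  (StarAlgebra.adjoin ℂ (resolventFns m)).le_topologicalClosure <|
    StarAlgebra.subset_adjoin ℂ _ ⟨x, 1, one_ne_zero, fun y => by simp [resolventFn, resolventOne]⟩

lemma tendsto_resolventOne_inner_span {m : ℕ} (x : E m) :
    Tendsto (fun u : ℝ ∙ x => resolventOne ⟪x, (u : E m)⟫_ℝ) (cocompact _) (𝓝 0) := by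
  let L : (ℝ ∙ x) →ₗ[ℝ] ℝ := (innerₛₗ ℝ x).comp (ℝ ∙ x).subtype
  have hker : LinearMap.ker L = ⊥ := by
    refine (Submodule.eq_bot_iff _).2 fun u hu => ?_
    have hperp : (u : E m) ∈ (ℝ ∙ x)ᗮ :=
      Submodule.mem_orthogonal_singleton_iff_inner_right.2 hu
    have : (u : E m) ∈ (ℝ ∙ x) ⊓ (ℝ ∙ x)ᗮ := ⟨u.2, hperp⟩
    rw [Submodule.inf_orthogonal_eq_bot, Submodule.mem_bot] at this
    exact Subtype.ext this
  exact tendsto_resolventOne_cocompact.comp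
    (LinearMap.isClosedEmbedding_of_injective hker).tendsto_cocompact

/-- `h^1_x` is the levee `g ∘ P_U` with `U = ℝ ∙ x` and `g u = (i - ⟪x, u⟫)⁻¹`, and
`V ≤ Uᗮ` says exactly that `x ∈ Vᗮ`. -/
lemma IsResolventChar.apply_resolventFn {m : ℕ} {V : Submodule ℝ (E m)} {w : E m}
    {φ : ↥(CR m) → ℂ} (hφ : IsResolventChar m V w φ) (x : E m) :
    (x ∈ Vᗮ → φ ⟨resolventFn x, resolventFn_mem_CR x⟩ = resolventOne ⟪x, w⟫_ℝ) ∧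
      (x ∉ Vᗮ → φ ⟨resolventFn x, resolventFn_mem_CR x⟩ = 0) := by
  have hproj (y : E m) : ⟪x, (ℝ ∙ x).starProjection y⟫_ℝ = ⟪x, y⟫_ℝ := by
    rw [← Submodule.inner_starProjection_left_eq_right,
      Submodule.starProjection_eq_self_iff.2 (Submodule.mem_span_singleton_self x)]
  have hlevee := hφ (ℝ ∙ x) _ (continuous_resolventOne.comp
    (continuous_const.inner continuous_subtype_val)) (tendsto_resolventOne_inner_span x)
    ⟨resolventFn x, resolventFn_mem_CR x⟩ (fun y => by simp [resolventFn, hproj])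
  have hVx : V ≤ (ℝ ∙ x)ᗮ ↔ x ∈ Vᗮ := by
    rw [Submodule.le_orthogonal_iff_le_orthogonal, Submodule.span_singleton_le_iff_mem]
  exact ⟨fun hxV => by simpa [hproj] using hlevee.1 (hVx.2 hxV),
    fun hxV => hlevee.2 (mt hVx.1 hxV)⟩

lemma IsResolventChar.apply_resolventFn_ne_zero_iff {m : ℕ} {V : Submodule ℝ (E m)} {w : E m}
    {φ : ↥(CR m) → ℂ} (hφ : IsResolventChar m V w φ) (x : E m) :
    φ ⟨resolventFn x, resolventFn_mem_CR x⟩ ≠ 0 ↔ x ∈ Vᗮ := by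
  have hvalue := IsResolventChar.apply_resolventFn hφ x
  by_cases hxV : x ∈ Vᗮ
  · simp [hxV, hvalue.1 hxV, resolventOne_ne_zero]
  · simp [hxV, hvalue.2 hxV]

end

/-- the characters `χ(V+w)` distinguish affine subspaces: if the characters
`χ(V+w)` and `χ(V'+w')` agree on every element of `C_R(ℝ^m)`, then `V = V'` and `w = w'`. -/
theorem resolventChar_injective (m : ℕ)
    (V V' : Submodule ℝ (E m)) (w w' : E m) (hw : w ∈ Vᗮ) (hw' : w' ∈ V'ᗮ)
    (φ φ' : WeakDual.characterSpace ℂ (CR m))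
    (hφ : IsResolventChar m V w (fun a => (φ : WeakDual ℂ (CR m)) a))
    (hφ' : IsResolventChar m V' w' (fun a => (φ' : WeakDual ℂ (CR m)) a))
    (h : ∀ f : ↥(CR m), (φ : WeakDual ℂ (CR m)) f = (φ' : WeakDual ℂ (CR m)) f) :
    V = V' ∧ w = w' := by
  have horth : Vᗮ = V'ᗮ := by
    ext x
    rw [← IsResolventChar.apply_resolventFn_ne_zero_iff hφ,
      ← IsResolventChar.apply_resolventFn_ne_zero_iff hφ', h]
  have hV : V = V' := by
    rw [← V.orthogonal_orthogonal, horth, V'.orthogonal_orthogonal]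
  refine ⟨hV, ?_⟩
  have hdiff : w - w' ∈ Vᗮ := Submodule.sub_mem _ hw (horth ▸ hw')
  have hinner : ⟪w - w', w⟫_ℝ = ⟪w - w', w'⟫_ℝ := by
    apply resolventOne_injective
    rw [← (IsResolventChar.apply_resolventFn hφ _).1 hdiff,
      ← (IsResolventChar.apply_resolventFn hφ' _).1 (horth ▸ hdiff), h]
  rw [← sub_eq_zero, ← inner_self_eq_zero (𝕜 := ℝ), inner_sub_right, hinner, sub_self]
end
end

section
/- The pointwise product of two levees is a levee: let X be a real inner product space, let V₁, V₂ ⊆ X be finite-dimensional subspaces, and let g_i : V_i → ℂ be continuous functions vanishing at infinity (i = 1, 2). Then there exists a continuous function g : V₁ + V₂ → ℂ vanishing at infinity such that for all y ∈ X: g₁(P_{V₁} y) · g₂(P_{V₂} y) = g(P_{V₁+V₂} y). -/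
/-!
Take `g v := g₁ (P_{V₁} v) * g₂ (P_{V₂} v)` on `V = V₁ + V₂`; the identity holds because
`P_{Vᵢ} ∘ P_V = P_{Vᵢ}`. The map `v ↦ (P_{V₁} v, P_{V₂} v)` is injective on `V`, since its kernel
lies in `V ⊓ (V₁ᗮ ⊓ V₂ᗮ) = V ⊓ Vᗮ = 0`; as `V` is finite dimensional it is a closed embedding into
`V₁ × V₂`, hence tends to infinity at infinity. So `g` vanishes at infinity because
`(a, b) ↦ g₁ a * g₂ b` does, each factor being bounded and one of them small off a compact set.
-/

open Filter Topology
open scoped ZeroAtInfty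

theorem tendsto_mul_prod_cocompact {α β R : Type*} [TopologicalSpace α] [TopologicalSpace β]
    [SeminormedRing R] {f : α → R} {g : β → R} (hfc : Continuous f)
    (hf : Tendsto f (cocompact α) (𝓝 0)) (hgc : Continuous g) (hg : Tendsto g (cocompact β) (𝓝 0)) :
    Tendsto (fun p : α × β => f p.1 * g p.2) (cocompact (α × β)) (𝓝 0) := by
  let F : C₀(α, R) := ⟨⟨f, hfc⟩, hf⟩
  let G : C₀(β, R) := ⟨⟨g, hgc⟩, hg⟩
  rw [← coprod_cocompact, Filter.coprod, tendsto_sup]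
  constructor
  · exact (hf.comp tendsto_comap).zero_mul_isBoundedUnder_le
      (isBoundedUnder_of ⟨‖G.toBCF‖, fun p => G.toBCF.norm_coe_le_norm p.2⟩)
  · exact isBoundedUnder_le_mul_tendsto_zero
      (isBoundedUnder_of ⟨‖F.toBCF‖, fun p => F.toBCF.norm_coe_le_norm p.1⟩)
      (hg.comp tendsto_comap)

namespace Submodule

variable {𝕜 E : Type*} [RCLike 𝕜] [NormedAddCommGroup E] [InnerProductSpace 𝕜 E]
  (K₁ K₂ : Submodule 𝕜 E) [K₁.HasOrthogonalProjection] [K₂.HasOrthogonalProjection]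

noncomputable def projectionPair : ↥(K₁ ⊔ K₂) →ₗ[𝕜] K₁ × K₂ :=
  (K₁.orthogonalProjectionOnto.toLinearMap ∘ₗ (K₁ ⊔ K₂).subtype).prod
    (K₂.orthogonalProjectionOnto.toLinearMap ∘ₗ (K₁ ⊔ K₂).subtype)

@[simp]
theorem projectionPair_apply (v : ↥(K₁ ⊔ K₂)) :
    projectionPair K₁ K₂ v = (K₁.orthogonalProjectionOnto v, K₂.orthogonalProjectionOnto v) :=
  rfl

theorem ker_projectionPair : LinearMap.ker (projectionPair K₁ K₂) = ⊥ := by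
  rw [projectionPair, LinearMap.ker_prod, LinearMap.ker_comp, LinearMap.ker_comp,
    ← comap_inf, ker_orthogonalProjectionOnto, ker_orthogonalProjectionOnto, inf_orthogonal,
    ← disjoint_iff_comap_eq_bot]
  exact orthogonal_disjoint _

theorem tendsto_projectionPair_cocompact [FiniteDimensional 𝕜 K₁] [FiniteDimensional 𝕜 K₂] :
    Tendsto (projectionPair K₁ K₂) (cocompact _) (cocompact (K₁ × K₂)) :=
  (LinearMap.isClosedEmbedding_of_injective (ker_projectionPair K₁ K₂)).tendsto_cocompact

end Submodule

/-- the pointwise product of two levees is a levee: if `V₁, V₂ ⊆ X` are finite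
dimensional subspaces and `gᵢ ∈ C₀(Vᵢ)`, then there is a `g ∈ C₀(V₁ + V₂)` with
`g₁(P_{V₁} y) · g₂(P_{V₂} y) = g(P_{V₁+V₂} y)` for all `y ∈ X`. -/
theorem mul_levee (X : Type*) [NormedAddCommGroup X] [InnerProductSpace ℝ X]
    (V₁ V₂ : Submodule ℝ X) [FiniteDimensional ℝ V₁] [FiniteDimensional ℝ V₂]
    (g₁ : V₁ → ℂ) (g₂ : V₂ → ℂ)
    (hc₁ : Continuous g₁) (hz₁ : Tendsto g₁ (cocompact _) (𝓝 0))
    (hc₂ : Continuous g₂) (hz₂ : Tendsto g₂ (cocompact _) (𝓝 0)) :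
    ∃ g : ↥(V₁ ⊔ V₂) → ℂ, Continuous g ∧ Tendsto g (cocompact _) (𝓝 0) ∧
      ∀ y : X, g₁ (Submodule.orthogonalProjectionOnto V₁ y) * g₂ (Submodule.orthogonalProjectionOnto V₂ y) =
        g (Submodule.orthogonalProjectionOnto (V₁ ⊔ V₂) y) := by
  refine ⟨(fun p : V₁ × V₂ => g₁ p.1 * g₂ p.2) ∘ V₁.projectionPair V₂,
    (hc₁.fst'.mul hc₂.snd').comp (LinearMap.continuous_of_finiteDimensional _),
    (tendsto_mul_prod_cocompact hc₁ hz₁ hc₂ hz₂).comp (V₁.tendsto_projectionPair_cocompact V₂),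
    fun y => ?_⟩
  rw [Function.comp_apply, Submodule.projectionPair_apply, ← Submodule.starProjection_apply,
    Submodule.orthogonalProjectionOnto_starProjection_of_le (le_sup_left : V₁ ≤ V₁ ⊔ V₂),
    Submodule.orthogonalProjectionOnto_starProjection_of_le (le_sup_right : V₂ ≤ V₁ ⊔ V₂)]
end

section
/- The pointwise product of two Schwartz levees is a Schwartz levee: let X be a real inner product space, let V₁, V₂ ⊆ X be finite-dimensional subspaces, and let g_i : V_i → ℂ be Schwartz functions on the finite-dimensional inner product spaces V_i (i = 1, 2). Then there exists a Schwartz function g : V₁ + V₂ → ℂ such that for all y ∈ X: g₁(P_{V₁} y) · g₂(P_{V₂} y) = g(P_{V₁+V₂} y). -/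
/-!
The function `(a, b) ↦ g₁ a * g₂ b` is Schwartz on `V₁ × V₂`: by Leibniz, its derivatives are
controlled by those of `g₁` and `g₂`, and `‖(a, b)‖ ≤ (1 + ‖a‖) (1 + ‖b‖)`. The map
`v ↦ (P_{V₁} v, P_{V₂} v)` on `V₁ + V₂` is injective, since its kernel lies in
`V₁ᗮ ⊓ V₂ᗮ = (V₁ + V₂)ᗮ`; being linear on a finite-dimensional space, it is antilipschitz, so
composing with it preserves the Schwartz class. Finally `P_{Vᵢ} ∘ P_{V₁+V₂} = P_{Vᵢ}`.
-/

open scoped ContDiff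

theorem ContinuousLinearMap.norm_iteratedFDeriv_comp_right_le {𝕜 E F G : Type*}
    [NontriviallyNormedField 𝕜] [NormedAddCommGroup E] [NormedSpace 𝕜 E]
    [NormedAddCommGroup F] [NormedSpace 𝕜 F] [NormedAddCommGroup G] [NormedSpace 𝕜 G]
    (L : G →L[𝕜] E) {f : E → F} (hf : ContDiff 𝕜 ∞ f) (n : ℕ) (x : G) :
    ‖iteratedFDeriv 𝕜 n (f ∘ L) x‖ ≤ ‖iteratedFDeriv 𝕜 n f (L x)‖ * ‖L‖ ^ n := by
  rw [L.iteratedFDeriv_comp_right hf x (by exact_mod_cast le_top)]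
  simpa using (iteratedFDeriv 𝕜 n f (L x)).norm_compContinuousLinearMap_le fun _ => L

theorem Prod.norm_le_one_add_mul_one_add {E F : Type*} [SeminormedAddCommGroup E]
    [SeminormedAddCommGroup F] (x : E × F) : ‖x‖ ≤ (1 + ‖x.1‖) * (1 + ‖x.2‖) := by
  rw [Prod.norm_def]
  apply max_le <;> nlinarith [norm_nonneg x.1, norm_nonneg x.2]

namespace SchwartzMap

variable {E F A : Type*} [NormedAddCommGroup E] [NormedSpace ℝ E]
  [NormedAddCommGroup F] [NormedSpace ℝ F] [NormedRing A] [NormedAlgebra ℝ A]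

lemma norm_iteratedFDeriv_comp_fst_le (f : 𝓢(E, A)) (n : ℕ) (x : E × F) :
    ‖iteratedFDeriv ℝ n (f ∘ Prod.fst) x‖ ≤ ‖iteratedFDeriv ℝ n f x.1‖ :=
  ((ContinuousLinearMap.fst ℝ E F).norm_iteratedFDeriv_comp_right_le f.smooth' n x).trans <|
    mul_le_of_le_one_right (norm_nonneg _)
      (pow_le_one₀ (norm_nonneg _) (ContinuousLinearMap.norm_fst_le ℝ E F))

lemma norm_iteratedFDeriv_comp_snd_le (g : 𝓢(F, A)) (n : ℕ) (x : E × F) :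
    ‖iteratedFDeriv ℝ n (g ∘ Prod.snd) x‖ ≤ ‖iteratedFDeriv ℝ n g x.2‖ :=
  ((ContinuousLinearMap.snd ℝ E F).norm_iteratedFDeriv_comp_right_le g.smooth' n x).trans <|
    mul_le_of_le_one_right (norm_nonneg _)
      (pow_le_one₀ (norm_nonneg _) (ContinuousLinearMap.norm_snd_le ℝ E F))

noncomputable def tensor (f : 𝓢(E, A)) (g : 𝓢(F, A)) : 𝓢(E × F, A) where
  toFun x := f x.1 * g x.2
  smooth' := (f.smooth'.comp contDiff_fst).mul (g.smooth'.comp contDiff_snd)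
  decay' k n := by
    set Sf := 2 ^ k * (Finset.Iic (k, n)).sup (fun m => SchwartzMap.seminorm ℝ m.1 m.2) f
    set Sg := 2 ^ k * (Finset.Iic (k, n)).sup (fun m => SchwartzMap.seminorm ℝ m.1 m.2) g
    refine ⟨2 ^ n * (Sf * Sg), fun x => ?_⟩
    have hf (i : ℕ) (hi : i ≤ n) : (1 + ‖x.1‖) ^ k * ‖iteratedFDeriv ℝ i (f ∘ Prod.fst) x‖ ≤ Sf :=
      (mul_le_mul_of_nonneg_left (f.norm_iteratedFDeriv_comp_fst_le i x) (by positivity)).trans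
        (one_add_le_sup_seminorm_apply (𝕜 := ℝ) (m := (k, n)) le_rfl hi f x.1)
    have hg (i : ℕ) (hi : i ≤ n) : (1 + ‖x.2‖) ^ k * ‖iteratedFDeriv ℝ i (g ∘ Prod.snd) x‖ ≤ Sg :=
      (mul_le_mul_of_nonneg_left (g.norm_iteratedFDeriv_comp_snd_le i x) (by positivity)).trans
        (one_add_le_sup_seminorm_apply (𝕜 := ℝ) (m := (k, n)) le_rfl hi g x.2)
    calc ‖x‖ ^ k * ‖iteratedFDeriv ℝ n (fun x : E × F => f x.1 * g x.2) x‖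
        ≤ ((1 + ‖x.1‖) * (1 + ‖x.2‖)) ^ k * ∑ i ∈ Finset.range (n + 1), (n.choose i : ℝ) *
            ‖iteratedFDeriv ℝ i (f ∘ Prod.fst) x‖ * ‖iteratedFDeriv ℝ (n - i) (g ∘ Prod.snd) x‖ := by
          gcongr
          · exact x.norm_le_one_add_mul_one_add
          · exact norm_iteratedFDeriv_mul_le (f.smooth'.comp contDiff_fst)
              (g.smooth'.comp contDiff_snd) x (by exact_mod_cast le_top)
      _ = ∑ i ∈ Finset.range (n + 1), (n.choose i : ℝ) *
            (((1 + ‖x.1‖) ^ k * ‖iteratedFDeriv ℝ i (f ∘ Prod.fst) x‖) *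
              ((1 + ‖x.2‖) ^ k * ‖iteratedFDeriv ℝ (n - i) (g ∘ Prod.snd) x‖)) := by
          rw [mul_pow, Finset.mul_sum]; congr! 1; ring
      _ ≤ ∑ i ∈ Finset.range (n + 1), (n.choose i : ℝ) * (Sf * Sg) := by
          gcongr with i hi
          · exact hf i (Finset.mem_range_succ_iff.mp hi)
          · exact hg (n - i) (Nat.sub_le n i)
      _ = 2 ^ n * (Sf * Sg) := by
          rw [← Finset.sum_mul, ← Nat.cast_sum, Nat.sum_range_choose, Nat.cast_pow, Nat.cast_ofNat]

@[simp]
lemma tensor_apply (f : 𝓢(E, A)) (g : 𝓢(F, A)) (x : E × F) : f.tensor g x = f x.1 * g x.2 := rfl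

end SchwartzMap

theorem Submodule.injective_orthogonalProjectionOnto_prod {𝕜 X : Type*} [RCLike 𝕜]
    [NormedAddCommGroup X] [InnerProductSpace 𝕜 X] (U₁ U₂ : Submodule 𝕜 X)
    [U₁.HasOrthogonalProjection] [U₂.HasOrthogonalProjection] :
    Function.Injective fun v : ↥(U₁ ⊔ U₂) =>
      (U₁.orthogonalProjectionOnto v, U₂.orthogonalProjectionOnto v) := by
  let P : ↥(U₁ ⊔ U₂) →ₗ[𝕜] U₁ × U₂ :=
    (U₁.orthogonalProjectionOnto.toLinearMap ∘ₗ (U₁ ⊔ U₂).subtype).prod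
      (U₂.orthogonalProjectionOnto.toLinearMap ∘ₗ (U₁ ⊔ U₂).subtype)
  refine (injective_iff_map_eq_zero P).mpr fun v hv => ?_
  obtain ⟨h₁, h₂⟩ := Prod.mk_eq_zero.mp hv
  have hv_perp : (v : X) ∈ (U₁ ⊔ U₂)ᗮ := Submodule.inf_orthogonal U₁ U₂ ▸
    ⟨orthogonalProjectionOnto_eq_zero_iff.mp h₁, orthogonalProjectionOnto_eq_zero_iff.mp h₂⟩
  exact Subtype.ext <| (Submodule.mem_bot 𝕜).mp <|
    Submodule.inf_orthogonal_eq_bot (U₁ ⊔ U₂) ▸ ⟨v.2, hv_perp⟩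

/-- the pointwise product of two Schwartz levees is a Schwartz levee: if
`V₁, V₂ ⊆ X` are finite dimensional subspaces and `gᵢ` are Schwartz functions on `Vᵢ`, then
there is a Schwartz function `g` on `V₁ + V₂` with
`g₁(P_{V₁} y) · g₂(P_{V₂} y) = g(P_{V₁+V₂} y)` for all `y ∈ X`. -/
theorem mul_schwartzLevee (X : Type*) [NormedAddCommGroup X] [InnerProductSpace ℝ X]
    (V₁ V₂ : Submodule ℝ X) [FiniteDimensional ℝ V₁] [FiniteDimensional ℝ V₂]
    (g₁ : SchwartzMap V₁ ℂ) (g₂ : SchwartzMap V₂ ℂ) :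
    ∃ g : SchwartzMap ↥(V₁ ⊔ V₂) ℂ,
      ∀ y : X, g₁ (V₁.orthogonalProjectionOnto y) * g₂ (V₂.orthogonalProjectionOnto y) =
        g ((V₁ ⊔ V₂).orthogonalProjectionOnto y) := by
  let P : ↥(V₁ ⊔ V₂) →L[ℝ] V₁ × V₂ :=
    (V₁.orthogonalProjectionOnto ∘L (V₁ ⊔ V₂).subtypeL).prod
      (V₂.orthogonalProjectionOnto ∘L (V₁ ⊔ V₂).subtypeL)
  obtain ⟨K, -, hK⟩ := (P : ↥(V₁ ⊔ V₂) →ₗ[ℝ] V₁ × V₂).exists_antilipschitzWith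
    (LinearMap.ker_eq_bot_of_injective (Submodule.injective_orthogonalProjectionOnto_prod V₁ V₂))
  refine ⟨SchwartzMap.compCLMOfAntilipschitz ℝ P.hasTemperateGrowth hK (g₁.tensor g₂), fun y => ?_⟩
  simp [P, Submodule.orthogonalProjectionOnto_starProjection_of_le]
end

section
/- Levees supported over distinct subspaces are linearly independent: let X be a real inner product space, let V₁, …, V_k ⊆ X be pairwise distinct finite-dimensional subspaces, and let g_i : V_i → ℂ be continuous functions vanishing at infinity. If Σ_{i=1}^k g_i(P_{V_i} y) = 0 for all y ∈ X, then g_i = 0 for every i. -/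
/-!
Suppose some `g i` is nonzero and pick `i₀` with `V i₀` minimal among the subspaces carrying a
nonzero `g i`. A real vector space is not a finite union of proper subspaces, so there is
`w ⊥ V i₀` whose projection onto every other such `V j` is nonzero. Along the ray `y = v + t • w`
(`v ∈ V i₀`) the `i₀`-th term of the sum is constantly `g i₀ v`, while every other argument
escapes to infinity, so those terms tend to `0` as `t → ∞`. Hence `g i₀ v = 0` for all `v`.
-/

open Filter Topology Bornology

theorem Submodule.exists_mem_forall_notMem_of_not_le {k E ι : Type*} [DivisionRing k]
    [Infinite k] [AddCommGroup E] [Module k E] {M : Submodule k E} {W : ι → Submodule k E}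
    (s : Finset ι) (hW : ∀ j ∈ s, ¬ M ≤ W j) : ∃ x ∈ M, ∀ j ∈ s, x ∉ W j := by
  by_contra! hcover
  obtain ⟨j, hj⟩ := Subspace.exists_eq_top_of_iUnion_eq_univ
    (p := fun j : s => (W j).comap M.subtype) <| Set.eq_univ_of_forall fun x => by
      obtain ⟨j, hj, hx⟩ := hcover x x.2
      exact Set.mem_iUnion.2 ⟨⟨j, hj⟩, hx⟩
  exact hW j j.2 fun x hx => (Submodule.eq_top_iff'.1 hj ⟨x, hx⟩ : _)

theorem tendsto_const_add_smul_atTop_cobounded {E : Type*} [NormedAddCommGroup E]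
    [NormedSpace ℝ E] (a : E) {b : E} (hb : b ≠ 0) :
    Tendsto (fun t : ℝ => a + t • b) atTop (cobounded E) := by
  refine (tendsto_const_add_cobounded a).comp <| tendsto_norm_atTop_iff_cobounded.1 ?_
  simp only [norm_smul, Real.norm_eq_abs]
  exact tendsto_abs_atTop_atTop.atTop_mul_const (norm_pos_iff.2 hb)

section

variable {X : Type*} [NormedAddCommGroup X] [InnerProductSpace ℝ X]

theorem Submodule.exists_mem_orthogonal_forall_orthogonalProjectionOnto_ne_zero {ι : Type*}
    (U : Submodule ℝ X) [U.HasOrthogonalProjection] (V : ι → Submodule ℝ X)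
    [∀ j, (V j).HasOrthogonalProjection] (s : Finset ι) (hV : ∀ j ∈ s, ¬ V j ≤ U) :
    ∃ w ∈ Uᗮ, ∀ j ∈ s, (V j).orthogonalProjectionOnto w ≠ 0 := by
  obtain ⟨w, hw, hwV⟩ := Submodule.exists_mem_forall_notMem_of_not_le (M := Uᗮ)
    (W := fun j => (V j)ᗮ) s fun j hj => by
      rw [Submodule.orthogonal_le_orthogonal_iff]
      exact hV j hj
  exact ⟨w, hw, fun j hj => mt Submodule.orthogonalProjectionOnto_eq_zero_iff.1 (hwV j hj)⟩

theorem eq_zero_of_sum_comp_orthogonalProjectionOnto_eq_zero {ι E : Type*} [AddCommMonoid E]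
    [TopologicalSpace E] [ContinuousAdd E] [T2Space E] (V : ι → Submodule ℝ X)
    [∀ i, (V i).HasOrthogonalProjection] (g : ∀ i, V i → E) {s : Finset ι} {i₀ : ι}
    (hi₀ : i₀ ∈ s) (hmin : ∀ j ∈ s, j ≠ i₀ → ¬ V j ≤ V i₀)
    (hz : ∀ j ∈ s, j ≠ i₀ → Tendsto (g j) (cobounded _) (𝓝 0))
    (hsum : ∀ y : X, ∑ j ∈ s, g j ((V j).orthogonalProjectionOnto y) = 0) :
    g i₀ = 0 := by
  classical
  funext v
  obtain ⟨w, hw, hPw⟩ := (V i₀).exists_mem_orthogonal_forall_orthogonalProjectionOnto_ne_zero V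
    (s.erase i₀) fun j hj => hmin j (Finset.mem_of_mem_erase hj) (Finset.ne_of_mem_erase hj)
  have hP (t : ℝ) : (V i₀).orthogonalProjectionOnto ((v : X) + t • w) = v := by
    rw [map_add, map_smul, Submodule.orthogonalProjectionOnto_mem_subspace_eq_self,
      Submodule.orthogonalProjectionOnto_apply_of_mem_orthogonal hw, smul_zero, add_zero]
  have hray (t : ℝ) : g i₀ v + ∑ j ∈ s.erase i₀,
      g j ((V j).orthogonalProjectionOnto v + t • (V j).orthogonalProjectionOnto w) = 0 := by
    have h := hsum (v + t • w)
    rw [← Finset.add_sum_erase s _ hi₀, hP] at h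
    simpa only [map_add, map_smul] using h
  have hlim : Tendsto (fun t : ℝ => g i₀ v + ∑ j ∈ s.erase i₀,
      g j ((V j).orthogonalProjectionOnto v + t • (V j).orthogonalProjectionOnto w))
      atTop (𝓝 (g i₀ v + 0)) := by
    refine tendsto_const_nhds.add ?_
    rw [← Finset.sum_const_zero (s := s.erase i₀)]
    refine tendsto_finsetSum _ fun j hj => ?_
    exact (hz j (Finset.mem_of_mem_erase hj) (Finset.ne_of_mem_erase hj)).comp
      (tendsto_const_add_smul_atTop_cobounded _ (hPw j hj))
  simpa using tendsto_nhds_unique hlim (by simp only [hray]; exact tendsto_const_nhds)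

end

theorem levees_linearIndependent_general (X : Type*) [NormedAddCommGroup X] [InnerProductSpace ℝ X]
    (k : ℕ) (V : Fin k → Submodule ℝ X) [∀ i, FiniteDimensional ℝ (V i)]
    (hV : Function.Injective V)
    (g : ∀ i, V i → ℂ)
    (hz : ∀ i, Tendsto (g i) (cocompact _) (𝓝 0))
    (hsum : ∀ y : X, ∑ i, g i ((V i).orthogonalProjectionOnto y) = 0) :
    ∀ i, g i = 0 := by
  classical
  by_contra! hne
  set s := Finset.univ.filter fun i => g i ≠ 0
  obtain ⟨i₀, hi₀, hmin⟩ :=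
    s.finite_toSet.exists_minimalFor V _ (by simpa [s, Set.Nonempty] using hne)
  have hstrict : ∀ j ∈ s, j ≠ i₀ → ¬ V j ≤ V i₀ :=
    fun j hj hji hle => hji (hV (le_antisymm hle (hmin hj hle)))
  have hsum_s (y : X) : ∑ j ∈ s, g j ((V j).orthogonalProjectionOnto y) = 0 := by
    rw [Finset.sum_subset s.subset_univ fun j _ hj => by simp_all [s]]
    exact hsum y
  exact (Finset.mem_filter.1 hi₀).2 <| eq_zero_of_sum_comp_orthogonalProjectionOnto_eq_zero V g
    hi₀ hstrict (fun j _ _ => (hz j).mono_left Metric.cobounded_le_cocompact) hsum_s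

/-- levees supported over pairwise distinct finite dimensional subspaces are
linearly independent: if `V₁, …, V_k ⊆ X` are pairwise distinct finite dimensional subspaces,
`g_i ∈ C₀(V_i)`, and `Σ_{i=1}^k g_i(P_{V_i} y) = 0` for all `y ∈ X`, then every `g_i = 0`. -/
theorem levees_linearIndependent (X : Type*) [NormedAddCommGroup X] [InnerProductSpace ℝ X]
    (k : ℕ) (V : Fin k → Submodule ℝ X) [∀ i, FiniteDimensional ℝ (V i)]
    (hV : Function.Injective V)
    (g : ∀ i, V i → ℂ) (hc : ∀ i, Continuous (g i))
    (hz : ∀ i, Tendsto (g i) (cocompact _) (𝓝 0))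
    (hsum : ∀ y : X, ∑ i, g i ((V i).orthogonalProjectionOnto y) = 0) :
    ∀ i, g i = 0 :=
  levees_linearIndependent_general X k V hV g hz hsum
end

section
/- Resolvent functions in linearly independent directions are uniformly far apart: let X be a real inner product space and let x, y ∈ X be linearly independent. Then sup_{z ∈ X} |h^1_x(z) − h^1_y(z)| ≥ 1, where h^1_x(z) = 1/(i − ⟨x, z⟩) and h^1_y(z) = 1/(i − ⟨y, z⟩). Equivalently, the distance between h^1_x and h^1_y in the sup norm of C_b(X, ℂ) is at least 1. -/
open Filter Topology
open scoped BoundedContinuousFunction InnerProductSpace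

noncomputable section

-- norm of each resolvent value is ≤ 1
lemma inv_norm_le_one (a : ℝ) : ‖(Complex.I - (a : ℂ))⁻¹‖ ≤ 1 := by
  rw [norm_inv]
  have h1 : (1:ℝ) ≤ ‖Complex.I - (a:ℂ)‖ := by
    have := Complex.abs_im_le_norm (Complex.I - (a:ℂ))
    simpa using this
  have h0 : (0:ℝ) < ‖Complex.I - (a:ℂ)‖ := lt_of_lt_of_le one_pos h1
  rw [inv_le_one_iff₀]
  right; exact h1

lemma key_norm (t : ℝ) (ht : 1 ≤ t) :
    1 - t⁻¹ ≤ ‖(Complex.I - (t : ℂ))⁻¹ - (Complex.I - ((0:ℝ) : ℂ))⁻¹‖ := by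
  have ht0 : (0:ℝ) < t := lt_of_lt_of_le one_pos ht
  have hIt : ‖Complex.I - (t:ℂ)‖ ≥ t := by
    have := Complex.abs_re_le_norm (Complex.I - (t:ℂ))
    simp only [Complex.sub_re, Complex.I_re, Complex.ofReal_re, zero_sub, abs_neg] at this
    calc t ≤ |t| := le_abs_self t
    _ ≤ _ := this
  have h1 : ‖(Complex.I - (t:ℂ))⁻¹‖ ≤ t⁻¹ := by
    rw [norm_inv]
    exact inv_anti₀ ht0 hIt
  have h2 : ‖(Complex.I - ((0:ℝ):ℂ))⁻¹‖ = 1 := by simp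
  calc 1 - t⁻¹ ≤ ‖(Complex.I - ((0:ℝ):ℂ))⁻¹‖ - ‖(Complex.I - (t:ℂ))⁻¹‖ := by
        rw [h2]; linarith
  _ ≤ ‖(Complex.I - ((0:ℝ):ℂ))⁻¹ - (Complex.I - (t:ℂ))⁻¹‖ := norm_sub_norm_le _ _
  _ = _ := norm_sub_rev _ _

lemma key_exists (X : Type*) [NormedAddCommGroup X] [InnerProductSpace ℝ X]
    (x y : X) (hxy : LinearIndependent ℝ ![x, y]) (ε : ℝ) (hε : 0 < ε) :
    ∃ z : X, 1 - ε ≤ ‖(Complex.I - ((⟪x, z⟫_ℝ : ℝ) : ℂ))⁻¹ -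
        (Complex.I - ((⟪y, z⟫_ℝ : ℝ) : ℂ))⁻¹‖ := by
  have hy : y ≠ 0 := by
    intro h
    exact hxy.ne_zero 1 (by simpa using h)
  set z₀ : X := (‖y‖^2) • x - ⟪x, y⟫_ℝ • y with hz₀def
  have hz₀ : z₀ ≠ 0 := by
    intro h
    have hx : x = ((‖y‖^2)⁻¹ * ⟪x, y⟫_ℝ) • y := by
      have hny : (‖y‖:ℝ)^2 ≠ 0 := pow_ne_zero 2 (norm_ne_zero_iff.mpr hy)
      have : (‖y‖^2) • x = ⟪x, y⟫_ℝ • y := by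
        rwa [hz₀def, sub_eq_zero] at h
      rw [mul_smul]
      rw [← this, smul_smul, inv_mul_cancel₀ hny, one_smul]
    rw [linearIndependent_fin2] at hxy
    exact hxy.2 ((‖y‖^2)⁻¹ * ⟪x, y⟫_ℝ) hx.symm
  have hyz₀ : ⟪y, z₀⟫_ℝ = 0 := by
    simp only [hz₀def, inner_sub_right, real_inner_smul_right]
    rw [real_inner_self_eq_norm_sq, real_inner_comm]
    ring
  have hxz₀ : 0 < ⟪x, z₀⟫_ℝ := by
    have hself : ⟪z₀, z₀⟫_ℝ = (‖y‖^2) * ⟪x, z₀⟫_ℝ := by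
      nth_rewrite 1 [hz₀def]
      rw [inner_sub_left, real_inner_smul_left, real_inner_smul_left, hyz₀]
      ring
    have hpos : 0 < ⟪z₀, z₀⟫_ℝ := by
      rw [real_inner_self_eq_norm_sq]
      exact pow_pos (norm_pos_iff.mpr hz₀) 2
    nlinarith [sq_nonneg ‖y‖, norm_pos_iff.mpr hy]
  set t : ℝ := max 1 ε⁻¹ with htdef
  have ht1 : 1 ≤ t := le_max_left _ _
  have ht0 : 0 < t := lt_of_lt_of_le one_pos ht1
  refine ⟨(t / ⟪x, z₀⟫_ℝ) • z₀, ?_⟩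
  have hxz : ⟪x, (t / ⟪x, z₀⟫_ℝ) • z₀⟫_ℝ = t := by
    rw [real_inner_smul_right, div_mul_cancel₀]
    exact ne_of_gt hxz₀
  have hyz : ⟪y, (t / ⟪x, z₀⟫_ℝ) • z₀⟫_ℝ = 0 := by
    rw [real_inner_smul_right, hyz₀, mul_zero]
  rw [hxz, hyz]
  have := key_norm t ht1
  have htinv : t⁻¹ ≤ ε := by
    rw [inv_le_comm₀ ht0 hε]
    exact le_max_right _ _
  linarith

/-- resolvent functions in linearly independent directions are uniformly far
apart: if `x, y ∈ X` are linearly independent then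
`sup_{z ∈ X} |h¹_x(z) − h¹_y(z)| ≥ 1`, where `h¹_x(z) = 1/(i − ⟨x, z⟩)`; equivalently, for
the corresponding elements of `C_b(X, ℂ)` we have `‖h¹_x − h¹_y‖ ≥ 1`. -/
theorem resolvents_dist_ge_one (X : Type*) [NormedAddCommGroup X] [InnerProductSpace ℝ X]
    (x y : X) (hxy : LinearIndependent ℝ ![x, y]) :
    (1 ≤ ⨆ z : X, ‖(Complex.I - ((⟪x, z⟫_ℝ : ℝ) : ℂ))⁻¹ -
        (Complex.I - ((⟪y, z⟫_ℝ : ℝ) : ℂ))⁻¹‖) ∧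
    ∀ f g : X →ᵇ ℂ,
      (∀ z : X, f z = (Complex.I - ((⟪x, z⟫_ℝ : ℝ) : ℂ))⁻¹) →
      (∀ z : X, g z = (Complex.I - ((⟪y, z⟫_ℝ : ℝ) : ℂ))⁻¹) →
      1 ≤ ‖f - g‖ := by
  constructor
  · have hbdd : BddAbove (Set.range fun z : X =>
        ‖(Complex.I - ((⟪x, z⟫_ℝ : ℝ) : ℂ))⁻¹ - (Complex.I - ((⟪y, z⟫_ℝ : ℝ) : ℂ))⁻¹‖) := by
      refine ⟨2, ?_⟩
      rintro _ ⟨z, rfl⟩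
      calc _ ≤ ‖(Complex.I - ((⟪x, z⟫_ℝ : ℝ) : ℂ))⁻¹‖ + ‖(Complex.I - ((⟪y, z⟫_ℝ : ℝ) : ℂ))⁻¹‖ :=
            norm_sub_le _ _
      _ ≤ 1 + 1 := add_le_add (inv_norm_le_one _) (inv_norm_le_one _)
      _ = 2 := by norm_num
    refine le_of_forall_pos_le_add fun ε hε => ?_
    obtain ⟨z, hz⟩ := key_exists X x y hxy ε hε
    have hle := le_ciSup hbdd z
    linarith
  · intro f g hf hg
    refine le_of_forall_pos_le_add fun ε hε => ?_
    obtain ⟨z, hz⟩ := key_exists X x y hxy ε hε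
    have hval : ‖(f - g) z‖ ≤ ‖f - g‖ := BoundedContinuousFunction.norm_coe_le_norm _ _
    rw [BoundedContinuousFunction.sub_apply, hf, hg] at hval
    linarith
end
end
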